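/- arXiv:2604.23883 — 3 statements merged into one kernel-verified Lean document; each statement's English description precedes it below -/
import Mathlib

section
/- Let μ be a Borel probability measure on [0,1] with no atom of mass greater than 1/2. Define φ : [0,1) → [0,1) by φ(y) = y + 1/2 mod 1, and let Q^μ be the quantile function of μ. Then the set of z ∈ [0,1) with Q^μ(z) = Q^μ(φ(z)) has Lebesgue measure zero. -/
open MeasureTheory Set

/-- The quantile function of a Borel probability measure `μ` on `[0,1]`:
`Q^μ(p) = inf {t ∈ [0,1] : μ([0,t]) ≥ p}`. -/
noncomputable def quantile (μ : Measure ℝ) (p : ℝ) : ℝ :=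
  sInf {t ∈ Icc (0:ℝ) 1 | ENNReal.ofReal p ≤ μ (Icc 0 t)}

/-- The half-rotation of the circle `[0,1)`: `φ(y) = y + 1/2 mod 1`. -/
noncomputable def halfRot (y : ℝ) : ℝ := Int.fract (y + 1/2)

/-! If `Q^μ(z) = Q^μ(z + 1/2)` then `Q^μ` is constant on `[z, z + 1/2]`, and the common value
carries an atom of mass at least `1/2`. Since no atom is heavier than `1/2`, two such points
`w₁ < w₂` in `[0, 1/2)` are impossible: `Q^μ` would be constant on `[w₁, w₂ + 1/2]`, which
is longer than `1/2`. So the set in question has at most two points, `w` and `w + 1/2`. -/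

section Quantile

variable {μ : Measure ℝ} {p q a b c : ℝ}

lemma quantile_nonneg : 0 ≤ quantile μ p :=
  Real.sInf_nonneg fun _ ht => ht.1.1

lemma quantile_le_of_ofReal_le {t : ℝ} (ht : t ∈ Icc 0 1)
    (h : ENNReal.ofReal p ≤ μ (Icc 0 t)) : quantile μ p ≤ t :=
  csInf_le ⟨0, fun _ hs => hs.1.1⟩ ⟨ht, h⟩

lemma quantile_le_one : quantile μ p ≤ 1 := by
  rcases eq_empty_or_nonempty {t ∈ Icc (0:ℝ) 1 | ENNReal.ofReal p ≤ μ (Icc 0 t)}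
    with h | ⟨t, ht⟩
  · simp only [quantile, h, Real.sInf_empty, zero_le_one]
  · exact (quantile_le_of_ofReal_le ht.1 ht.2).trans ht.1.2

lemma quantile_mono (hq : ENNReal.ofReal q ≤ μ (Icc 0 1)) (hpq : p ≤ q) :
    quantile μ p ≤ quantile μ q :=
  csInf_le_csInf ⟨0, fun _ ht => ht.1.1⟩ ⟨1, ⟨zero_le_one, le_rfl⟩, hq⟩
    fun _ ht => ⟨ht.1, (ENNReal.ofReal_le_ofReal hpq).trans ht.2⟩

/-- The infimum is attained because `t ↦ μ [0, t]` is right-continuous. -/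
lemma ofReal_le_measure_Icc_quantile [IsFiniteMeasureOnCompacts μ]
    (hp : ENNReal.ofReal p ≤ μ (Icc 0 1)) : ENNReal.ofReal p ≤ μ (Icc 0 (quantile μ p)) := by
  have hInter : Icc 0 (quantile μ p) = ⋂ s : Ioi (quantile μ p), Icc 0 (s : ℝ) := by
    ext x
    simp only [mem_Icc, mem_iInter, Subtype.forall, mem_Ioi]
    exact ⟨fun ⟨hx0, hx⟩ s hs => ⟨hx0, hx.trans hs.le⟩,
      fun h => ⟨(h _ (lt_add_one _)).1,
        forall_gt_imp_ge_iff_le_of_dense.mp fun s hs => (h s hs).2⟩⟩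
  have hmono : Monotone fun s : Ioi (quantile μ p) => Icc (0:ℝ) s :=
    fun _ _ hst => Icc_subset_Icc_right hst
  rw [hInter, hmono.measure_iInter (fun _ => measurableSet_Icc.nullMeasurableSet)
    ⟨⟨_, mem_Ioi.2 (lt_add_one _)⟩, isCompact_Icc.measure_ne_top⟩]
  refine le_iInf fun ⟨s, hs⟩ => ?_
  obtain ⟨t, ht, hts⟩ := exists_lt_of_csInf_lt
    (s := {t ∈ Icc (0:ℝ) 1 | ENNReal.ofReal p ≤ μ (Icc 0 t)})
    ⟨1, ⟨zero_le_one, le_rfl⟩, hp⟩ hs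
  exact ht.2.trans (measure_mono (Icc_subset_Icc_right hts.le))

lemma measure_Ico_quantile_le : μ (Ico 0 (quantile μ p)) ≤ ENNReal.ofReal p := by
  have hUnion : Ico 0 (quantile μ p) = ⋃ s : Iio (quantile μ p), Icc 0 (s : ℝ) := by
    ext x
    simp only [mem_Ico, mem_iUnion, mem_Icc, Subtype.exists, mem_Iio]
    exact ⟨fun ⟨hx0, hx⟩ => ⟨x, hx, hx0, le_rfl⟩,
      fun ⟨s, hs, hx0, hxs⟩ => ⟨hx0, hxs.trans_lt hs⟩⟩
  have hmono : Monotone fun s : Iio (quantile μ p) => Icc (0:ℝ) s :=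
    fun _ _ hst => Icc_subset_Icc_right hst
  rw [hUnion, hmono.measure_iUnion]
  refine iSup_le fun ⟨s, hs⟩ => ?_
  rcases lt_or_ge s 0 with hs0 | hs0
  · simp [Icc_eq_empty_of_lt hs0]
  · by_contra! h
    exact (not_le.2 (mem_Iio.1 hs))
      (quantile_le_of_ofReal_le ⟨hs0, (mem_Iio.1 hs).le.trans quantile_le_one⟩ h.le)

lemma ofReal_le_add_measure_singleton_of_quantile_eq [IsFiniteMeasureOnCompacts μ]
    (hb : ENNReal.ofReal b ≤ μ (Icc 0 1)) (h : quantile μ a = quantile μ b) :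
    ENNReal.ofReal b ≤ ENNReal.ofReal a + μ {quantile μ b} := by
  calc ENNReal.ofReal b ≤ μ (Icc 0 (quantile μ b)) := ofReal_le_measure_Icc_quantile hb
    _ = μ (Ico 0 (quantile μ b)) + μ {quantile μ b} := by
      rw [← Ico_union_right quantile_nonneg, measure_union (by simp) (measurableSet_singleton _)]
    _ ≤ ENNReal.ofReal a + μ {quantile μ b} := by
      gcongr
      exact h ▸ measure_Ico_quantile_le

lemma le_add_of_quantile_eq [IsFiniteMeasureOnCompacts μ] (hsupp : 1 ≤ μ (Icc 0 1))
    (hatom : ∀ t, μ {t} ≤ ENNReal.ofReal c) (ha : 0 ≤ a) (hb : b ≤ 1) (hc : 0 ≤ c)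
    (h : quantile μ a = quantile μ b) : b ≤ a + c := by
  have hb' : ENNReal.ofReal b ≤ μ (Icc 0 1) := (ENNReal.ofReal_le_one.2 hb).trans hsupp
  refine (ENNReal.ofReal_le_ofReal_iff (by positivity)).1 ?_
  calc ENNReal.ofReal b ≤ ENNReal.ofReal a + μ {quantile μ b} :=
      ofReal_le_add_measure_singleton_of_quantile_eq hb' h
    _ ≤ ENNReal.ofReal a + ENNReal.ofReal c := by gcongr; exact hatom _
    _ = ENNReal.ofReal (a + c) := (ENNReal.ofReal_add ha hc).symm

lemma subsingleton_quantile_eq_quantile_add_half [IsFiniteMeasureOnCompacts μ]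
    (hsupp : 1 ≤ μ (Icc 0 1)) (hatom : ∀ t, μ {t} ≤ 1/2) :
    {w ∈ Ico (0:ℝ) (1/2) | quantile μ w = quantile μ (w + 1/2)}.Subsingleton := by
  have hatom' : ∀ t, μ {t} ≤ ENNReal.ofReal (1/2) := by
    rw [ENNReal.ofReal_div_of_pos two_pos, ENNReal.ofReal_one, ENNReal.ofReal_ofNat]
    exact hatom
  have hmono {p q : ℝ} (hpq : p ≤ q) (hq : q ≤ 1) : quantile μ p ≤ quantile μ q :=
    quantile_mono ((ENNReal.ofReal_le_one.2 hq).trans hsupp) hpq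
  intro w₁ ⟨⟨hw₁, hw₁'⟩, h₁⟩ w₂ ⟨⟨hw₂, hw₂'⟩, h₂⟩
  by_contra! hne
  wlog hlt : w₁ < w₂ generalizing w₁ w₂
  · exact this hw₂ hw₂' h₂ hw₁ hw₁' h₁ hne.symm ((not_lt.1 hlt).lt_of_ne hne.symm)
  have hflat : quantile μ w₁ = quantile μ (w₂ + 1/2) := by
    refine (le_antisymm (hmono hlt.le (by linarith)) ?_).trans h₂
    exact h₁ ▸ hmono (by linarith) (by linarith)
  linarith [le_add_of_quantile_eq hsupp hatom' hw₁ (by linarith) (by norm_num) hflat]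

end Quantile

lemma halfRot_of_lt_half {y : ℝ} (h₀ : 0 ≤ y) (h : y < 1/2) : halfRot y = y + 1/2 :=
  Int.fract_eq_self.2 ⟨by linarith, by linarith⟩

lemma halfRot_of_half_le {y : ℝ} (h : 1/2 ≤ y) (h₁ : y < 1) : halfRot y = y - 1/2 := by
  rw [halfRot, show y + 1/2 = y - 1/2 + 1 by ring, Int.fract_add_one,
    Int.fract_eq_self.2 ⟨by linarith, by linarith⟩]

/-- If `μ` is a Borel probability measure on `[0,1]` with no atom of mass greater
than `1/2`, then `{z ∈ [0,1) : Q^μ(z) = Q^μ(φ(z))}` is Lebesgue null. -/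
theorem quantile_halfRot_ne (μ : Measure ℝ) [IsProbabilityMeasure μ]
    (hsupp : μ (Icc (0:ℝ) 1) = 1)
    (hatom : ∀ t : ℝ, μ {t} ≤ 1/2) :
    volume {z ∈ Ico (0:ℝ) 1 | quantile μ z = quantile μ (halfRot z)} = 0 := by
  set T := {w ∈ Ico (0:ℝ) (1/2) | quantile μ w = quantile μ (w + 1/2)}
  have hT : T.Subsingleton := subsingleton_quantile_eq_quantile_add_half hsupp.ge hatom
  have hcover : {z ∈ Ico (0:ℝ) 1 | quantile μ z = quantile μ (halfRot z)} ⊆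
      T ∪ (· + 1/2) '' T := by
    rintro z ⟨⟨hz₀, hz₁⟩, hz⟩
    rcases lt_or_ge z (1/2) with h | h
    · exact Or.inl ⟨⟨hz₀, h⟩, halfRot_of_lt_half hz₀ h ▸ hz⟩
    · refine Or.inr ⟨z - 1/2, ⟨⟨by linarith, by linarith⟩, ?_⟩, sub_add_cancel z _⟩
      rw [sub_add_cancel, ← halfRot_of_half_le h hz₁, hz]
  exact measure_mono_null hcover
    (measure_union_null (hT.measure_zero _) ((hT.image _).measure_zero _))
end

section
/- Let a, b ∈ ℝ with |a − b| ≥ 4, let w : [0,1] → ℝ be continuous with sup_{s,r∈[0,1]} |w_s − w_r| ≤ 1/16, and let φ : [0,1] → [0,∞) with ∫₀¹ φ = 1. Define for (y,z) ∈ [1/2,2]×[0,2π] the quantity D(y,z) = ∫₀¹ φ(s)·(sin(y(a−b+w_s)+z) − sin(y·w_s+z)) ds. Then (1/(3π)) ∫₀^{2π} ∫_{1/2}^{2} D(y,z)² dy dz ≥ 1 − 2·sup_{s,r}|w_s−w_r|² − (4/3)·(|a−b| − sup_{s,r}|w_s−w_r|)^{−1} ≥ 1/2. -/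
/-!
Writing `D(y, z) = P(y) cos z + Q(y) sin z`, the phase average is `∫₀^{2π} D² dz = π (P² + Q²)`, and
`P² + Q² = ∫∫ φ(s) φ(r) K(y, w_s - w_r) ds dr` for the kernel
`K(y, δ) = 2 cos (yδ) - cos (y(δ + c)) - cos (y(δ - c))`, `c = a - b`.
After moving the `y`-integral inside, `cos x ≥ 1 - x²/2` bounds the first term of `∫ K dy` from below,
and `|∫ cos (ye) dy| ≤ 2/|e|` with `|δ ± c| ≥ |c| - M` makes the other two small. Since `φ ⊗ φ` is a
probability weight on `[0,1]²`, this pointwise bound on `∫ K dy` passes to the double integral.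
-/

open Real Set MeasureTheory

lemma intervalIntegral_swap_of_continuous {E : Type*} [NormedAddCommGroup E] [NormedSpace ℝ E]
    [CompleteSpace E] {F : ℝ → ℝ → E} (hF : Continuous F.uncurry) (a b c d : ℝ) :
    ∫ x in a..b, ∫ y in c..d, F x y = ∫ y in c..d, ∫ x in a..b, F x y :=
  intervalIntegral_intervalIntegral_swap <|
    (hF.continuousOn.integrableOn_compact (isCompact_uIcc.prod isCompact_uIcc)).mono_set
      (prod_mono uIoc_subset_uIcc uIoc_subset_uIcc)

lemma intervalIntegral_swap₃_of_continuous {G : ℝ → ℝ → ℝ → ℝ}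
    (hG : Continuous fun p : ℝ × ℝ × ℝ => G p.1 p.2.1 p.2.2) (a b c d e f : ℝ) :
    ∫ x in a..b, ∫ y in c..d, ∫ t in e..f, G x y t
      = ∫ y in c..d, ∫ t in e..f, ∫ x in a..b, G x y t := by
  have hinner : Continuous (Function.uncurry fun x y => ∫ t in e..f, G x y t) :=
    intervalIntegral.continuous_parametric_intervalIntegral_of_continuous'
      (f := fun p : ℝ × ℝ => fun t => G p.1 p.2 t) (by fun_prop) e f
  rw [intervalIntegral_swap_of_continuous hinner]
  refine intervalIntegral.integral_congr fun y _ => ?_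
  exact intervalIntegral_swap_of_continuous (F := fun x t => G x y t) (by fun_prop) ..

lemma intervalIntegral_sq_add_sq {f g : ℝ → ℝ} {a b : ℝ} (hf : IntervalIntegrable f volume a b)
    (hg : IntervalIntegrable g volume a b) :
    (∫ s in a..b, f s) ^ 2 + (∫ s in a..b, g s) ^ 2
      = ∫ s in a..b, ∫ r in a..b, (f s * f r + g s * g r) := by
  have hinner : ∀ s, ∫ r in a..b, (f s * f r + g s * g r)
      = f s * (∫ r in a..b, f r) + g s * ∫ r in a..b, g r := fun s => by
    rw [intervalIntegral.integral_add (hf.const_mul _) (hg.const_mul _),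
      intervalIntegral.integral_const_mul, intervalIntegral.integral_const_mul]
  simp_rw [hinner]
  rw [intervalIntegral.integral_add (hf.mul_const _) (hg.mul_const _),
    intervalIntegral.integral_mul_const, intervalIntegral.integral_mul_const, sq, sq]

lemma integral_mul_cos_add_mul_sin_sq (p q : ℝ) :
    ∫ z in (0:ℝ)..2 * π, (p * cos z + q * sin z) ^ 2 = π * (p ^ 2 + q ^ 2) := by
  have hexpand : ∀ z, (p * cos z + q * sin z) ^ 2
      = p ^ 2 * cos z ^ 2 + (2 * p * q * (sin z * cos z) + q ^ 2 * sin z ^ 2) := fun z => by ring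
  simp_rw [hexpand]
  rw [intervalIntegral.integral_add (Continuous.intervalIntegrable (by fun_prop) _ _)
      (Continuous.intervalIntegrable (by fun_prop) _ _),
    intervalIntegral.integral_add (Continuous.intervalIntegrable (by fun_prop) _ _)
      (Continuous.intervalIntegrable (by fun_prop) _ _)]
  simp only [intervalIntegral.integral_const_mul, integral_cos_sq, integral_sin_sq,
    integral_sin_mul_cos₁, sin_two_pi, cos_two_pi, sin_zero, cos_zero]
  ring

lemma abs_integral_cos_mul_le {e : ℝ} (he : e ≠ 0) (a b : ℝ) :
    |∫ y in a..b, cos (y * e)| ≤ 2 / |e| := by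
  rw [intervalIntegral.integral_comp_mul_right cos he, integral_cos, smul_eq_mul, abs_mul,
    abs_inv, inv_mul_eq_div]
  gcongr
  calc |sin (b * e) - sin (a * e)| ≤ |sin (b * e)| + |sin (a * e)| := abs_sub _ _
    _ ≤ 2 := by linarith [abs_sin_le_one (b * e), abs_sin_le_one (a * e)]

lemma integral_cos_mul_ge {a b : ℝ} (hab : a ≤ b) (δ : ℝ) :
    (b - a) - δ ^ 2 * (b ^ 3 - a ^ 3) / 6 ≤ ∫ y in a..b, cos (y * δ) := by
  have htaylor : ∫ y in a..b, (1 - (y * δ) ^ 2 / 2) = (b - a) - δ ^ 2 * (b ^ 3 - a ^ 3) / 6 := by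
    have hpoly : ∀ y : ℝ, 1 - (y * δ) ^ 2 / 2 = 1 - δ ^ 2 / 2 * y ^ 2 := fun y => by ring
    simp_rw [hpoly]
    rw [intervalIntegral.integral_sub (Continuous.intervalIntegrable (by fun_prop) _ _)
      (Continuous.intervalIntegrable (by fun_prop) _ _),
      intervalIntegral.integral_const_mul, integral_pow, intervalIntegral.integral_const, smul_eq_mul]
    push_cast
    ring
  rw [← htaylor]
  exact intervalIntegral.integral_mono_on hab (Continuous.intervalIntegrable (by fun_prop) _ _)
      (Continuous.intervalIntegrable (by fun_prop) _ _)
    fun y _ => one_sub_sq_div_two_le_cos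

lemma mul_integral_le_integral_mul {φ g : ℝ → ℝ} {a b L : ℝ} (hab : a ≤ b)
    (hφ : IntervalIntegrable φ volume a b)
    (hφg : IntervalIntegrable (fun x => φ x * g x) volume a b)
    (hφ0 : ∀ x ∈ Icc a b, 0 ≤ φ x) (hg : ∀ x ∈ Icc a b, L ≤ g x) :
    L * ∫ x in a..b, φ x ≤ ∫ x in a..b, φ x * g x := by
  rw [← intervalIntegral.integral_const_mul]
  exact intervalIntegral.integral_mono_on hab (hφ.const_mul L) hφg fun x hx => by
    rw [mul_comm]; exact mul_le_mul_of_nonneg_left (hg x hx) (hφ0 x hx)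

lemma le_integral_mul_integral_mul_of_le {φ : ℝ → ℝ} {K : ℝ → ℝ → ℝ} {a b L : ℝ} (hab : a ≤ b)
    (hφ : Continuous φ) (hK : Continuous K.uncurry) (hφ0 : ∀ x ∈ Icc a b, 0 ≤ φ x)
    (hφ1 : ∫ x in a..b, φ x = 1) (hKL : ∀ s ∈ Icc a b, ∀ r ∈ Icc a b, L ≤ K s r) :
    L ≤ ∫ s in a..b, φ s * ∫ r in a..b, φ r * K s r := by
  have hinner (s : ℝ) (hs : s ∈ Icc a b) : L ≤ ∫ r in a..b, φ r * K s r := by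
    simpa only [hφ1, mul_one] using mul_integral_le_integral_mul hab (hφ.intervalIntegrable _ _)
      (Continuous.intervalIntegrable (by fun_prop) _ _) hφ0 (hKL s hs)
  simpa only [hφ1, mul_one] using mul_integral_le_integral_mul hab (hφ.intervalIntegrable _ _)
    (Continuous.intervalIntegrable (by fun_prop) _ _) hφ0 hinner

noncomputable def shearKernel (c y δ : ℝ) : ℝ :=
  2 * cos (y * δ) - cos (y * (δ + c)) - cos (y * (δ - c))

lemma sin_sub_sin_mul_add_cos_sub_cos_mul (A B A' B' : ℝ) :
    (sin A - sin B) * (sin A' - sin B') + (cos A - cos B) * (cos A' - cos B')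
      = cos (A - A') + cos (B - B') - cos (A - B') - cos (B - A') := by
  simp only [cos_sub]
  ring

lemma sin_sub_sin_mul_add_cos_sub_cos_mul_eq_shearKernel (c y u v : ℝ) :
    (sin (y * (c + u)) - sin (y * u)) * (sin (y * (c + v)) - sin (y * v))
      + (cos (y * (c + u)) - cos (y * u)) * (cos (y * (c + v)) - cos (y * v))
      = shearKernel c y (u - v) := by
  rw [sin_sub_sin_mul_add_cos_sub_cos_mul, shearKernel]
  ring_nf

lemma integral_shearKernel_ge {c δ M : ℝ} (hδ : |δ| ≤ M) (hMc : M < |c|) :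
    3 - 21 / 8 * M ^ 2 - 4 / (|c| - M) ≤ ∫ y in (1/2 : ℝ)..2, shearKernel c y δ := by
  have hsmall {e : ℝ} (he : |c| - M ≤ |e|) : |∫ y in (1/2 : ℝ)..2, cos (y * e)| ≤ 2 / (|c| - M) :=
    (abs_integral_cos_mul_le (abs_pos.mp ((sub_pos.mpr hMc).trans_le he)) _ _).trans
      (div_le_div_of_nonneg_left zero_le_two (sub_pos.mpr hMc) he)
  have hplus : |c| - M ≤ |δ + c| := by
    have := abs_sub_abs_le_abs_sub c (-δ)
    rw [abs_neg, sub_neg_eq_add, add_comm] at this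
    linarith
  have hminus : |c| - M ≤ |δ - c| := by
    linarith [abs_sub_abs_le_abs_sub c δ, abs_sub_comm c δ]
  have hmain := integral_cos_mul_ge (show (1/2 : ℝ) ≤ 2 by norm_num) δ
  have hδM : δ ^ 2 ≤ M ^ 2 := sq_le_sq' (neg_le_of_abs_le hδ) (le_of_abs_le hδ)
  unfold shearKernel
  rw [intervalIntegral.integral_sub (Continuous.intervalIntegrable (by fun_prop) _ _)
      (Continuous.intervalIntegrable (by fun_prop) _ _),
    intervalIntegral.integral_sub (Continuous.intervalIntegrable (by fun_prop) _ _)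
      (Continuous.intervalIntegrable (by fun_prop) _ _),
    intervalIntegral.integral_const_mul]
  linarith [le_of_abs_le (hsmall hplus), le_of_abs_le (hsmall hminus),
    show 4 / (|c| - M) = 2 / (|c| - M) + 2 / (|c| - M) by ring]

section ShearFlow

variable {c : ℝ} {w φ : ℝ → ℝ}

lemma integral_sq_weighted_sin_sub_eq (hw : Continuous w) (hφ : Continuous φ) (y : ℝ) :
    ∫ z in (0:ℝ)..2 * π, (∫ s in (0:ℝ)..1, φ s * (sin (y * (c + w s) + z) - sin (y * w s + z))) ^ 2
      = π * ∫ s in (0:ℝ)..1, φ s * ∫ r in (0:ℝ)..1, φ r * shearKernel c y (w s - w r) := by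
  set f := fun s => φ s * (sin (y * (c + w s)) - sin (y * w s))
  set g := fun s => φ s * (cos (y * (c + w s)) - cos (y * w s))
  have hf : IntervalIntegrable f volume 0 1 := Continuous.intervalIntegrable (by fun_prop) _ _
  have hg : IntervalIntegrable g volume 0 1 := Continuous.intervalIntegrable (by fun_prop) _ _
  have hdecomp (z : ℝ) : ∫ s in (0:ℝ)..1, φ s * (sin (y * (c + w s) + z) - sin (y * w s + z))
      = (∫ s in (0:ℝ)..1, f s) * cos z + (∫ s in (0:ℝ)..1, g s) * sin z := by
    rw [← intervalIntegral.integral_mul_const, ← intervalIntegral.integral_mul_const,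
      ← intervalIntegral.integral_add (hf.mul_const _) (hg.mul_const _)]
    refine intervalIntegral.integral_congr fun s _ => ?_
    simp only [f, g, sin_add]
    ring
  simp_rw [hdecomp, integral_mul_cos_add_mul_sin_sq, intervalIntegral_sq_add_sq hf hg]
  congr 1
  refine intervalIntegral.integral_congr fun s _ => ?_
  rw [← intervalIntegral.integral_const_mul]
  refine intervalIntegral.integral_congr fun r _ => ?_
  simp only [f, g, ← sin_sub_sin_mul_add_cos_sub_cos_mul_eq_shearKernel]
  ring

lemma le_integral_integral_sq_shear {M : ℝ} (hMc : M < |c|) (hw : Continuous w)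
    (hosc : ∀ s ∈ Icc (0:ℝ) 1, ∀ r ∈ Icc (0:ℝ) 1, |w s - w r| ≤ M)
    (hφ : Continuous φ) (hφ0 : ∀ s ∈ Icc (0:ℝ) 1, 0 ≤ φ s) (hφ1 : ∫ s in (0:ℝ)..1, φ s = 1) :
    π * (3 - 21 / 8 * M ^ 2 - 4 / (|c| - M))
      ≤ ∫ y in (1/2 : ℝ)..2, ∫ z in (0:ℝ)..2 * π,
          (∫ s in (0:ℝ)..1, φ s * (sin (y * (c + w s) + z) - sin (y * w s + z))) ^ 2 := by
  simp_rw [integral_sq_weighted_sin_sub_eq hw hφ, intervalIntegral.integral_const_mul]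
  gcongr
  simp_rw [← intervalIntegral.integral_const_mul]
  rw [intervalIntegral_swap₃_of_continuous (by unfold shearKernel; fun_prop)]
  simp only [intervalIntegral.integral_const_mul]
  exact le_integral_mul_integral_mul_of_le zero_le_one hφ (by unfold shearKernel; fun_prop) hφ0 hφ1
    fun s hs r hr => integral_shearKernel_ge (hosc s hs r hr) hMc

end ShearFlow

/-- Variance lower bound for a single hit of the random shear flow.  For initial
vertical coordinates `a,b` with `|a − b| ≥ 4`, a continuous noise path `w` with
oscillation on `[0,1]` at most `M ≤ 1/16`, and a weight `φ ≥ 0` with `∫₀¹ φ = 1`,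
the averaged square of
`D(y,z) = ∫₀¹ φ(s)(sin(y(a−b+w_s)+z) − sin(y·w_s+z)) ds`
over `(y,z) ∈ [1/2,2]×[0,2π]` satisfies
`(1/(3π)) ∫∫ D² ≥ 1 − 2M² − (4/3)(|a−b| − M)⁻¹ ≥ 1/2`. -/
theorem shear_hit_variance_lower_bound
    (a b : ℝ) (hab : 4 ≤ |a - b|)
    (w : ℝ → ℝ) (hw : Continuous w)
    (M : ℝ) (hM16 : M ≤ 1/16)
    (hosc : ∀ s ∈ Icc (0:ℝ) 1, ∀ r ∈ Icc (0:ℝ) 1, |w s - w r| ≤ M)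
    (φ : ℝ → ℝ) (hφ : Continuous φ) (hφpos : ∀ s, 0 ≤ φ s)
    (hφint : ∫ s in (0:ℝ)..1, φ s = 1)
    (D : ℝ → ℝ → ℝ)
    (hD : ∀ y z, D y z =
      ∫ s in (0:ℝ)..1, φ s * (Real.sin (y * (a - b + w s) + z) - Real.sin (y * w s + z))) :
    (1 / (3 * π)) * (∫ z in (0:ℝ)..(2 * π), ∫ y in (1/2 : ℝ)..2, (D y z) ^ 2)
        ≥ 1 - 2 * M ^ 2 - (4/3) * (|a - b| - M)⁻¹
      ∧ 1 - 2 * M ^ 2 - (4/3) * (|a - b| - M)⁻¹ ≥ 1/2 := by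
  obtain rfl : D = fun y z => ∫ s in (0:ℝ)..1,
      φ s * (sin (y * (a - b + w s) + z) - sin (y * w s + z)) := funext₂ hD
  have hM0 : 0 ≤ M := (abs_nonneg _).trans (hosc 0 ⟨le_rfl, zero_le_one⟩ 0 ⟨le_rfl, zero_le_one⟩)
  have hinv : (|a - b| - M)⁻¹ ≤ 16 / 63 := by
    rw [inv_le_comm₀ (by linarith) (by norm_num)]
    linarith
  have hvar := le_integral_integral_sq_shear (by linarith) hw hosc hφ (fun s _ => hφpos s) hφint
  rw [intervalIntegral_swap_of_continuous (by fun_prop)]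
  refine ⟨?_, by nlinarith⟩
  calc 1 - 2 * M ^ 2 - (4/3) * (|a - b| - M)⁻¹
      ≤ (3 - 21 / 8 * M ^ 2 - 4 * (|a - b| - M)⁻¹) / 3 := by linarith [sq_nonneg M]
    _ = 1 / (3 * π) * (π * (3 - 21 / 8 * M ^ 2 - 4 / (|a - b| - M))) := by
        field_simp
    _ ≤ _ := by gcongr
end

section
/- Let 𝒳, 𝒴 be Polish spaces with 𝒴 uncountable, let x ↦ μ_x be a Borel measurable map from 𝒳 to probability measures on 𝒴, and let ν be a Borel probability measure on 𝒳 such that for ν-almost every x, μ_x has no atom of mass greater than 1/2. Then there exists a Borel measurable map x ↦ γ_x from 𝒳 to probability measures on 𝒴 × 𝒴 such that for ν-almost every x, both marginals of γ_x equal μ_x and γ_x assigns zero mass to the diagonal {(y,y) : y ∈ 𝒴}. -/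
/-!
Transport each `μ x` to `ℝ` by a Borel isomorphism and let `Q` be its quantile function, the
generalised inverse of the distribution function `F`, so that `Q Z` has law `μ x` when `Z` is
uniform. Taking `Z` uniform on the circle `ℝ / ℤ`, the half-turn `Z ↦ Z + 1/2` preserves its law, so
`(Q Z, Q (Z + 1/2))` couples `μ x` with itself. If `Q z = Q (z + 1/2)`, then `Q` is constant on
`[z, z + 1/2]` and its value is an atom of mass at least `1/2`; two such `z` in `(0, 1/2)` would
produce an atom of mass more than `1/2`. So the coupling charges the diagonal only on a finite,
hence null, set of `Z`. Measurability in `x` follows from `Q z ≤ t ↔ z ≤ F t`.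
-/

open MeasureTheory Set

namespace ProbabilityTheory

def IsOffDiagonalCoupling {α : Type*} [MeasurableSpace α] (γ : Measure (α × α))
    (ρ : Measure α) : Prop :=
  γ.map Prod.fst = ρ ∧ γ.map Prod.snd = ρ ∧ γ {p | p.1 = p.2} = 0

theorem IsOffDiagonalCoupling.map {α β : Type*} [MeasurableSpace α] [MeasurableSpace β]
    {γ : Measure (α × α)} {ρ : Measure α} (h : IsOffDiagonalCoupling γ ρ) (e : α ≃ᵐ β) :
    IsOffDiagonalCoupling (γ.map (e.prodCongr e)) (ρ.map e) := by
  obtain ⟨hfst, hsnd, hdiag⟩ := h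
  refine ⟨?_, ?_, ?_⟩
  · rw [Measure.map_map measurable_fst (e.prodCongr e).measurable, ← hfst,
      Measure.map_map e.measurable measurable_fst]
    rfl
  · rw [Measure.map_map measurable_snd (e.prodCongr e).measurable, ← hsnd,
      Measure.map_map e.measurable measurable_snd]
    rfl
  · rw [MeasurableEquiv.map_apply]
    show γ {p | e p.1 = e p.2} = 0
    simpa only [e.injective.eq_iff] using hdiag

theorem measurable_map_of_measurable_uncurry {α β γ : Type*} [MeasurableSpace α]
    [MeasurableSpace β] [MeasurableSpace γ] {m : Measure β} [SFinite m] {f : α → β → γ}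
    (hf : Measurable (Function.uncurry f)) : Measurable fun a => m.map (f a) := by
  refine Measure.measurable_of_measurable_coe _ fun s hs => ?_
  have hpre : ∀ a, m.map (f a) s = m (Prod.mk a ⁻¹' (Function.uncurry f ⁻¹' s)) := fun a =>
    Measure.map_apply (hf.comp measurable_prodMk_left) hs
  simp_rw [hpre]
  exact measurable_measure_prodMk_left (hf hs)

/-- The junk value `0` outside `(0, 1)` keeps `(x, z) ↦ quantile (κ x) z` jointly measurable. -/
noncomputable def quantile (ρ : Measure ℝ) (z : ℝ) : ℝ :=
  if z ∈ Ioo 0 1 then sInf {t | z ≤ cdf ρ t} else 0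

variable {ρ : Measure ℝ}

section Quantile

variable {z t : ℝ}

theorem quantile_le_iff (hz : z ∈ Ioo 0 1) : quantile ρ z ≤ t ↔ z ≤ cdf ρ t := by
  have hne : {t | z ≤ cdf ρ t}.Nonempty :=
    ((tendsto_cdf_atTop ρ).eventually (eventually_ge_nhds hz.2)).exists
  have hbdd : BddBelow {t | z ≤ cdf ρ t} := by
    obtain ⟨t₀, ht₀⟩ := ((tendsto_cdf_atBot ρ).eventually (eventually_lt_nhds hz.1)).exists
    refine ⟨t₀, fun t ht => le_of_not_gt fun htt₀ => ?_⟩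
    exact (ht.trans (monotone_cdf ρ htt₀.le)).not_gt ht₀
  rw [quantile, if_pos hz]
  refine ⟨fun h => ?_, fun h => csInf_le hbdd h⟩
  have hright : ∀ s ∈ Ioi t, z ≤ cdf ρ s := fun s hs => by
    obtain ⟨u, hu, hus⟩ := exists_lt_of_csInf_lt hne (h.trans_lt hs)
    exact hu.trans (monotone_cdf ρ hus.le)
  exact ge_of_tendsto ((cdf ρ).right_continuous t |>.mono Ioi_subset_Ici_self)
    (eventually_nhdsWithin_of_forall hright)

theorem le_cdf_quantile (hz : z ∈ Ioo 0 1) : z ≤ cdf ρ (quantile ρ z) :=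
  (quantile_le_iff hz).1 le_rfl

theorem monotoneOn_quantile : MonotoneOn (quantile ρ) (Ioo 0 1) := fun _ ha _ hb hab =>
  (quantile_le_iff ha).2 (hab.trans (le_cdf_quantile hb))

theorem measure_Iio_quantile_le [IsProbabilityMeasure ρ] (hz : z ∈ Ioo 0 1) :
    ρ (Iio (quantile ρ z)) ≤ ENNReal.ofReal z := by
  have hlt : ∀ t ∈ Iio (quantile ρ z), cdf ρ t ≤ z := fun t ht => by
    by_contra! h
    exact ht.not_ge ((quantile_le_iff hz).2 h.le)
  have hleft := (cdf ρ).measure_Iio (tendsto_cdf_atBot ρ) (quantile ρ z)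
  rw [measure_cdf, sub_zero] at hleft
  rw [hleft]
  exact ENNReal.ofReal_le_ofReal <| le_of_tendsto ((cdf ρ).mono.tendsto_leftLim _)
    (eventually_nhdsWithin_of_forall hlt)

theorem ofReal_sub_le_measure_singleton_quantile [IsProbabilityMeasure ρ] {a b : ℝ}
    (ha : a ∈ Ioo 0 1) (hb : b ∈ Ioo 0 1) (heq : quantile ρ a = quantile ρ b) :
    ENNReal.ofReal (b - a) ≤ ρ {quantile ρ a} := by
  have hb' : ENNReal.ofReal b ≤ ρ (Iio (quantile ρ a)) + ρ {quantile ρ a} := by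
    rw [← measure_union (by simp) (measurableSet_singleton _), Iio_union_right, ← ofReal_cdf, heq]
    exact ENNReal.ofReal_le_ofReal (le_cdf_quantile hb)
  rw [ENNReal.ofReal_sub _ ha.1.le, tsub_le_iff_right, add_comm]
  exact hb'.trans (add_le_add_left (measure_Iio_quantile_le ha) _)

theorem measurable_quantile_uncurry {X : Type*} [MeasurableSpace X] {κ : X → Measure ℝ}
    [∀ x, IsProbabilityMeasure (κ x)] (hκ : Measurable κ) :
    Measurable fun p : X × ℝ => quantile (κ p.1) p.2 := by
  refine measurable_of_Iic fun t => ?_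
  have hcdf : Measurable fun x => cdf (κ x) t := by
    simp_rw [cdf_eq_real]
    exact (Measure.measurable_coe measurableSet_Iic).comp hκ |>.ennreal_toReal
  have hpre : (fun p : X × ℝ => quantile (κ p.1) p.2) ⁻¹' Iic t =
      {p | p.2 ∈ Ioo 0 1}.ite {p | p.2 ≤ cdf (κ p.1) t} {_p | 0 ≤ t} := by
    ext ⟨x, z⟩
    simp only [Set.ite, mem_union, mem_inter_iff, Set.mem_sdiff, mem_preimage, mem_Iic,
      mem_ofPred_eq]
    by_cases hz : z ∈ Ioo 0 1
    · simp only [hz, quantile_le_iff hz, not_true_eq_false, and_true, and_false, or_false]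
    · simp only [hz, quantile, if_false, not_false_eq_true, and_true, and_false, false_or]
  rw [hpre]
  exact (measurable_snd measurableSet_Ioo).ite (measurableSet_le measurable_snd
    (hcdf.comp measurable_fst)) (MeasurableSet.const _)

theorem measurable_quantile [IsProbabilityMeasure ρ] : Measurable (quantile ρ) :=
  (measurable_quantile_uncurry (κ := fun _ : Unit => ρ) measurable_const).comp
    (measurable_prodMk_left (x := ()))

theorem map_quantile_volume [IsProbabilityMeasure ρ] :
    (volume.restrict (Ioc 0 1)).map (quantile ρ) = ρ := by
  refine Measure.ext_of_Iic _ _ fun t => ?_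
  rw [Measure.restrict_congr_set Ioo_ae_eq_Ioc.symm, Measure.map_apply measurable_quantile
    measurableSet_Iic, Measure.restrict_apply (measurable_quantile measurableSet_Iic)]
  have hpre : quantile ρ ⁻¹' Iic t ∩ Ioo 0 1 = Iic (cdf ρ t) ∩ Ioo 0 1 := by
    ext z
    simp +contextual [quantile_le_iff]
  rw [hpre, measure_congr (ae_eq_refl _ |>.inter Ioo_ae_eq_Ioc), inter_comm, Ioc_inter_Iic,
    min_eq_right (cdf_le_one ρ t), Real.volume_Ioc, sub_zero, ofReal_cdf]

theorem subsingleton_quantile_eq_quantile_add_half [IsProbabilityMeasure ρ]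
    (hρ : ∀ r, ρ {r} ≤ 2⁻¹) :
    {z ∈ Ioo 0 2⁻¹ | quantile ρ z = quantile ρ (z + 2⁻¹)}.Subsingleton := by
  have hmem : ∀ {z : ℝ}, z ∈ Ioo 0 2⁻¹ → z ∈ Ioo 0 1 ∧ z + 2⁻¹ ∈ Ioo 0 1 := fun hz =>
    ⟨⟨hz.1, by linarith [hz.2]⟩, ⟨by linarith [hz.1], by linarith [hz.2]⟩⟩
  rintro a ⟨ha, hqa⟩ b ⟨hb, hqb⟩
  by_contra hne
  wlog hab : a < b generalizing a b
  · exact this hb hqb ha hqa (Ne.symm hne) ((Ne.symm hne).lt_of_le (not_lt.1 hab))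
  have hqab : quantile ρ a = quantile ρ b := by
    refine le_antisymm (monotoneOn_quantile (hmem ha).1 (hmem hb).1 hab.le) ?_
    rw [hqa]
    exact monotoneOn_quantile (hmem hb).1 (hmem ha).2 (by linarith [hb.2, ha.1])
  have hatom := (ofReal_sub_le_measure_singleton_quantile (hmem ha).1 (hmem hb).2
    (hqab.trans hqb)).trans (hρ _)
  rw [ENNReal.ofReal_le_iff_le_toReal (by simp), ENNReal.toReal_inv, ENNReal.toReal_ofNat]
    at hatom
  linarith

end Quantile

section Circle

instance : IsProbabilityMeasure (volume : Measure UnitAddCircle) :=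
  ⟨by simp⟩

theorem measurable_coe_equivIoc :
    Measurable fun θ : UnitAddCircle => (AddCircle.equivIoc 1 0 θ : ℝ) :=
  measurable_subtype_coe.comp (AddCircle.measurePreserving_equivIoc 1).measurable

theorem map_coe_equivIoc_volume :
    (volume : Measure UnitAddCircle).map (fun θ => (AddCircle.equivIoc 1 0 θ : ℝ)) =
      volume.restrict (Ioc 0 1) := by
  have h := AddCircle.measurePreserving_equivIoc 1 (a := 0)
  calc _ = (volume.map (AddCircle.equivIoc 1 0)).map Subtype.val :=
        (Measure.map_map measurable_subtype_coe h.measurable).symm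
    _ = _ := by rw [h.map_eq, map_comap_subtype_coe measurableSet_Ioc, zero_add]

theorem coe_equivIoc_add_half {z : ℝ} (hz : z ∈ Ioc 0 1) :
    (AddCircle.equivIoc 1 0 ((z : UnitAddCircle) + ((2⁻¹ : ℝ) : UnitAddCircle)) : ℝ) =
      if z ≤ 2⁻¹ then z + 2⁻¹ else z - 2⁻¹ := by
  rw [← AddCircle.coe_add]
  split_ifs with h
  · rw [AddCircle.equivIoc_coe_of_mem]
    constructor <;> linarith [hz.1]
  · rw [show z + 2⁻¹ = z - 2⁻¹ + 1 by ring, AddCircle.coe_add_period,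
      AddCircle.equivIoc_coe_of_mem]
    constructor <;> linarith [hz.2]

noncomputable def circleQuantile (ρ : Measure ℝ) (θ : UnitAddCircle) : ℝ :=
  quantile ρ (AddCircle.equivIoc 1 0 θ)

theorem map_circleQuantile_volume [IsProbabilityMeasure ρ] :
    (volume : Measure UnitAddCircle).map (circleQuantile ρ) = ρ := by
  calc volume.map (circleQuantile ρ)
      = (volume.map fun θ : UnitAddCircle => (AddCircle.equivIoc 1 0 θ : ℝ)).map (quantile ρ) :=
        (Measure.map_map measurable_quantile measurable_coe_equivIoc).symm
    _ = ρ := by rw [map_coe_equivIoc_volume, map_quantile_volume]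

theorem volume_setOf_circleQuantile_eq_add_half [IsProbabilityMeasure ρ] (hρ : ∀ r, ρ {r} ≤ 2⁻¹) :
    volume {θ : UnitAddCircle |
      circleQuantile ρ θ = circleQuantile ρ (θ + ((2⁻¹ : ℝ) : UnitAddCircle))} = 0 := by
  set N := {z ∈ Ioo 0 2⁻¹ | quantile ρ z = quantile ρ (z + 2⁻¹)}
  have hN : N.Countable := (subsingleton_quantile_eq_quantile_add_half hρ).countable
  let E : Set ℝ := {2⁻¹, 1} ∪ N ∪ (· + 2⁻¹) '' N
  have hE : E.Countable := ((countable_singleton _).insert _ |>.union hN).union (hN.image _)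
  -- With `θ = z`, `z ∈ (0, 1]`, the point `θ + 1/2` has coordinate `z ± 1/2`, so a diagonal hit
  -- puts `z` or `z - 1/2` into `N` unless `z ∈ {1/2, 1}`.
  refine measure_mono_null (t := (fun θ => (AddCircle.equivIoc 1 0 θ : ℝ)) ⁻¹' E)
    (fun θ hθ => ?_) ?_
  · obtain ⟨z, hz, rfl⟩ : ∃ z ∈ Ioc (0 : ℝ) 1, (z : UnitAddCircle) = θ :=
      ⟨_, by simpa using (AddCircle.equivIoc 1 0 θ).2, AddCircle.coe_equivIoc⟩
    have hz' : z ∈ Ioc 0 (0 + 1) := by rwa [zero_add]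
    simp only [mem_ofPred_eq, circleQuantile, coe_equivIoc_add_half hz,
      AddCircle.equivIoc_coe_of_mem hz'] at hθ
    rw [mem_preimage, AddCircle.equivIoc_coe_of_mem hz']
    split_ifs at hθ with hhalf
    · rcases hhalf.lt_or_eq with hlt | rfl
      · exact Or.inl (Or.inr ⟨⟨hz.1, hlt⟩, hθ⟩)
      · exact Or.inl (Or.inl (Or.inl rfl))
    · rcases eq_or_ne z 1 with rfl | hne
      · exact Or.inl (Or.inl (Or.inr rfl))
      · refine Or.inr ⟨z - 2⁻¹, ⟨⟨by linarith, by linarith [hz.2.lt_of_ne hne]⟩, ?_⟩, by ring⟩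
        rw [sub_add_cancel, hθ]
  · rw [← Measure.map_apply measurable_coe_equivIoc hE.measurableSet, map_coe_equivIoc_volume]
    exact hE.measure_zero _

end Circle

noncomputable def halfTurnCoupling (ρ : Measure ℝ) : Measure (ℝ × ℝ) :=
  volume.map fun θ : UnitAddCircle =>
    (circleQuantile ρ θ, circleQuantile ρ (θ + ((2⁻¹ : ℝ) : UnitAddCircle)))

section HalfTurnCoupling

variable [IsProbabilityMeasure ρ]

theorem measurable_circleQuantile : Measurable (circleQuantile ρ) :=
  measurable_quantile.comp measurable_coe_equivIoc

theorem measurable_circleQuantile_prod_add_half :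
    Measurable fun θ : UnitAddCircle =>
      (circleQuantile ρ θ, circleQuantile ρ (θ + ((2⁻¹ : ℝ) : UnitAddCircle))) :=
  measurable_circleQuantile.prodMk (measurable_circleQuantile.comp (measurable_add_const _))

instance : IsProbabilityMeasure (halfTurnCoupling ρ) :=
  Measure.isProbabilityMeasure_map measurable_circleQuantile_prod_add_half.aemeasurable

theorem isOffDiagonalCoupling_halfTurnCoupling (hρ : ∀ r, ρ {r} ≤ 2⁻¹) :
    IsOffDiagonalCoupling (halfTurnCoupling ρ) ρ := by
  refine ⟨?_, ?_, ?_⟩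
  · rw [halfTurnCoupling, Measure.map_map measurable_fst measurable_circleQuantile_prod_add_half]
    exact map_circleQuantile_volume
  · rw [halfTurnCoupling, Measure.map_map measurable_snd measurable_circleQuantile_prod_add_half]
    calc _ = (volume.map (· + ((2⁻¹ : ℝ) : UnitAddCircle))).map (circleQuantile ρ) :=
          (Measure.map_map measurable_circleQuantile (measurable_add_const _)).symm
      _ = ρ := by rw [map_add_right_eq_self, map_circleQuantile_volume]
  · rw [halfTurnCoupling, Measure.map_apply measurable_circleQuantile_prod_add_half
      (measurableSet_eq_fun measurable_fst measurable_snd)]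
    exact volume_setOf_circleQuantile_eq_add_half hρ

end HalfTurnCoupling

theorem measurable_halfTurnCoupling {X : Type*} [MeasurableSpace X] {κ : X → Measure ℝ}
    [∀ x, IsProbabilityMeasure (κ x)] (hκ : Measurable κ) :
    Measurable fun x => halfTurnCoupling (κ x) := by
  have hQ : Measurable fun p : X × UnitAddCircle => circleQuantile (κ p.1) p.2 :=
    (measurable_quantile_uncurry hκ).comp (measurable_fst.prodMk
      (measurable_coe_equivIoc.comp measurable_snd))
  exact measurable_map_of_measurable_uncurry (hQ.prodMk
    (hQ.comp (measurable_fst.prodMk ((measurable_add_const _).comp measurable_snd))))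

end ProbabilityTheory

open ProbabilityTheory

theorem measurable_coupling_off_diagonal_general
    {X Y : Type*} [MeasurableSpace X]
    [MeasurableSpace Y] [StandardBorelSpace Y] [Uncountable Y]
    (μ : X → Measure Y) (hμprob : ∀ x, IsProbabilityMeasure (μ x))
    (hμmeas : Measurable μ)
    (ν : Measure X)
    (hatom : ∀ᵐ x ∂ν, ∀ y : Y, μ x {y} ≤ 1/2) :
    ∃ γ : X → Measure (Y × Y), Measurable γ ∧ (∀ x, IsProbabilityMeasure (γ x)) ∧
      ∀ᵐ x ∂ν, (γ x).map Prod.fst = μ x ∧ (γ x).map Prod.snd = μ x ∧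
        γ x {p : Y × Y | p.1 = p.2} = 0 := by
  let e : Y ≃ᵐ ℝ := PolishSpace.measurableEquivOfNotCountable not_countable not_countable
  let κ x := (μ x).map e
  have := hμprob
  have : ∀ x, IsProbabilityMeasure (κ x) := fun x =>
    Measure.isProbabilityMeasure_map e.measurable.aemeasurable
  refine ⟨fun x => (halfTurnCoupling (κ x)).map (e.symm.prodCongr e.symm),
    (Measure.measurable_map _ (e.symm.prodCongr e.symm).measurable).comp
      (measurable_halfTurnCoupling ((Measure.measurable_map _ e.measurable).comp hμmeas)),
    fun x => Measure.isProbabilityMeasure_map (MeasurableEquiv.measurable _).aemeasurable, ?_⟩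
  filter_upwards [hatom] with x hx
  have hκ : ∀ r, κ x {r} ≤ 2⁻¹ := fun r => by
    rw [MeasurableEquiv.map_apply, ← e.image_symm, image_singleton, ← one_div]
    exact hx _
  have hcoupling := (isOffDiagonalCoupling_halfTurnCoupling hκ).map e.symm
  rw [e.map_symm_map] at hcoupling
  exact hcoupling

/-- Measurable selection of couplings avoiding the diagonal.  Let `X`, `Y` be
Polish (standard Borel) spaces with `Y` uncountable, `x ↦ μ x` a measurable map
to probability measures on `Y`, and `ν` a probability measure on `X` such that
for `ν`-a.e. `x`, `μ x` has no atom of mass greater than `1/2`.  Then there is a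
measurable map `x ↦ γ x` to probability measures on `Y × Y` such that `ν`-a.e.,
both marginals of `γ x` equal `μ x` and `γ x` gives zero mass to the diagonal. -/
theorem measurable_coupling_off_diagonal
    {X Y : Type*} [MeasurableSpace X] [StandardBorelSpace X]
    [MeasurableSpace Y] [StandardBorelSpace Y] [Uncountable Y]
    (μ : X → Measure Y) (hμprob : ∀ x, IsProbabilityMeasure (μ x))
    (hμmeas : Measurable μ)
    (ν : Measure X) [IsProbabilityMeasure ν]
    (hatom : ∀ᵐ x ∂ν, ∀ y : Y, μ x {y} ≤ 1/2) :
    ∃ γ : X → Measure (Y × Y), Measurable γ ∧ (∀ x, IsProbabilityMeasure (γ x)) ∧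
      ∀ᵐ x ∂ν, (γ x).map Prod.fst = μ x ∧ (γ x).map Prod.snd = μ x ∧
        γ x {p : Y × Y | p.1 = p.2} = 0 :=
  measurable_coupling_off_diagonal_general μ hμprob hμmeas ν hatom
end
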